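/- Exact compensated-coupling identity for online stochastic bipartite matching: For any online matching policy, on every sample path, v_off − v_on = Σ_{t=1}^{T} 1{ M(G_t(S^t)) ≠ 1{U^t ≠ ∅} + M(G_{t−1}(S^{t−1})) }, i.e., the difference between the offline maximum matching size and the number of matches made online equals the number of time steps at which the policy's action fails to satisfy the offline Bellman equation. -/

import Mathlib

/-!
Along the policy's sample path, write `a_t = 1{U^t ≠ ∅}`. Matching or discarding arrival `t`
changes the offline optimum by a controlled amount: the gap
`M(G_t(S^t)) − a_t − M(G_{t−1}(S^{t−1}))` always lies in `{0, 1}` (a matching of the remaining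
arrivals extends by the policy's edge, and an optimal matching loses at most one edge at
arrival `t` and one at the removed node). Hence each Bellman-violation indicator equals this gap,
and summing over `t` telescopes to `M(G_T(U)) − M(G_0(S^0)) − v_on = v_off − v_on`.
-/

open Finset

namespace OnlineMatching

variable {U V : Type*} (NB : V → Finset U) (θ : ℕ → V)

/-- A matching of `G_t(s)` is encoded by the set `D ⊆ [1, t]` of matched arrival times together
with the node `f τ ∈ s` assigned to each `τ ∈ D`. -/
def matchingSizes (t : ℕ) (s : Finset U) : Set ℕ :=
  {k : ℕ | ∃ D : Finset ℕ, D ⊆ Finset.Icc 1 t ∧ D.card = k ∧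
    ∃ f : ℕ → U, Set.InjOn f ↑D ∧ ∀ τ ∈ D, f τ ∈ NB (θ τ) ∧ f τ ∈ s}

def IsMatchingNumber (M : ℕ → Finset U → ℕ) : Prop :=
  ∀ t s, IsGreatest (matchingSizes NB θ t s) (M t s)

variable {NB θ} {t : ℕ} {s : Finset U} {k : ℕ} {M : ℕ → Finset U → ℕ}

lemma eq_zero_of_mem_matchingSizes_zero (hk : k ∈ matchingSizes NB θ 0 s) : k = 0 := by
  obtain ⟨D, hD, rfl, -⟩ := hk
  simpa using hD

lemma mem_matchingSizes_of_le {j : ℕ} (hk : k ∈ matchingSizes NB θ t s) (hj : j ≤ k) :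
    j ∈ matchingSizes NB θ t s := by
  obtain ⟨D, hD, rfl, f, hinj, hf⟩ := hk
  obtain ⟨E, hED, rfl⟩ := exists_subset_card_eq hj
  exact ⟨E, hED.trans hD, rfl, f, hinj.mono (by simpa using hED), fun τ hτ => hf τ (hED hτ)⟩

lemma matchingSizes_mono {t' : ℕ} {s' : Finset U} (ht : t ≤ t') (hs : s ⊆ s') :
    matchingSizes NB θ t s ⊆ matchingSizes NB θ t' s' := by
  rintro k ⟨D, hD, hk, f, hinj, hf⟩
  exact ⟨D, hD.trans (Icc_subset_Icc le_rfl ht), hk, f, hinj,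
    fun τ hτ => ⟨(hf τ hτ).1, hs (hf τ hτ).2⟩⟩

lemma sub_one_mem_matchingSizes_pred (hk : k ∈ matchingSizes NB θ t s) :
    k - 1 ∈ matchingSizes NB θ (t - 1) s := by
  obtain ⟨D, hD, rfl, f, hinj, hf⟩ := hk
  refine mem_matchingSizes_of_le ⟨D.erase t, ?_, rfl, f, hinj.mono (by simp),
    fun τ hτ => hf τ (mem_of_mem_erase hτ)⟩ pred_card_le_card_erase
  intro τ hτ
  have := hD (mem_of_mem_erase hτ)
  simp only [mem_Icc] at this ⊢
  have := ne_of_mem_erase hτ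
  omega

lemma IsMatchingNumber.apply_zero (hM : IsMatchingNumber NB θ M) : M 0 s = 0 :=
  eq_zero_of_mem_matchingSizes_zero (hM 0 s).1

lemma IsMatchingNumber.apply_pred_le (hM : IsMatchingNumber NB θ M) :
    M (t - 1) s ≤ M t s :=
  (hM t s).2 (matchingSizes_mono (Nat.sub_le t 1) subset_rfl (hM _ _).1)

lemma IsMatchingNumber.apply_le_pred_add_one (hM : IsMatchingNumber NB θ M) :
    M t s ≤ M (t - 1) s + 1 := by
  have := (hM (t - 1) s).2 (sub_one_mem_matchingSizes_pred (hM t s).1)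
  omega

variable [DecidableEq U]

lemma sub_one_mem_matchingSizes_sdiff (u : U) (hk : k ∈ matchingSizes NB θ t s) :
    k - 1 ∈ matchingSizes NB θ t (s \ {u}) := by
  obtain ⟨D, hD, rfl, f, hinj, hf⟩ := hk
  have hmatched_u : #(D.filter (f · = u)) ≤ 1 :=
    card_le_one.2 fun a ha b hb => hinj (mem_filter.1 ha).1 (mem_filter.1 hb).1
      ((mem_filter.1 ha).2.trans (mem_filter.1 hb).2.symm)
  have hsplit := card_filter_add_card_filter_not (s := D) (f · = u)
  refine mem_matchingSizes_of_le ⟨D.filter (¬f · = u), (filter_subset _ _).trans hD, rfl, f,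
    hinj.mono (coe_subset.2 (filter_subset _ _)), fun τ hτ => ?_⟩ (by omega)
  obtain ⟨hτD, hτu⟩ := mem_filter.1 hτ
  exact ⟨(hf τ hτD).1, mem_sdiff.2 ⟨(hf τ hτD).2, by simpa using hτu⟩⟩

lemma add_one_mem_matchingSizes {u : U} (ht : 1 ≤ t) (huN : u ∈ NB (θ t)) (hus : u ∈ s)
    (hk : k ∈ matchingSizes NB θ (t - 1) (s \ {u})) : k + 1 ∈ matchingSizes NB θ t s := by
  obtain ⟨D, hD, rfl, f, hinj, hf⟩ := hk
  have htD : t ∉ D := fun h => by have := mem_Icc.1 (hD h); omega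
  have hupd : ∀ τ ∈ D, Function.update f t u τ = f τ := fun τ hτ =>
    Function.update_of_ne (ne_of_mem_of_not_mem hτ htD) _ _
  refine ⟨insert t D, ?_, card_insert_of_notMem htD, Function.update f t u, ?_, ?_⟩
  · refine insert_subset (mem_Icc.2 ⟨ht, le_rfl⟩) (hD.trans (Icc_subset_Icc le_rfl ?_))
    omega
  · rw [coe_insert, Set.injOn_insert (by simpa using htD)]
    refine ⟨hinj.congr fun τ hτ => (hupd τ hτ).symm, ?_⟩
    rintro ⟨τ, hτ, hτu⟩
    rw [Function.update_self, hupd τ hτ] at hτu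
    have := (hf τ hτ).2
    simp [hτu] at this
  · intro τ hτ
    rcases mem_insert.1 hτ with rfl | hτ
    · simpa using ⟨huN, hus⟩
    · rw [hupd τ hτ]
      exact ⟨(hf τ hτ).1, (mem_sdiff.1 (hf τ hτ).2).1⟩

lemma IsMatchingNumber.apply_le_sdiff_add_one (hM : IsMatchingNumber NB θ M) (u : U) :
    M t s ≤ M t (s \ {u}) + 1 := by
  have := (hM t (s \ {u})).2 (sub_one_mem_matchingSizes_sdiff u (hM t s).1)
  omega

lemma IsMatchingNumber.apply_sdiff_pred_add_one_le (hM : IsMatchingNumber NB θ M) {u : U}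
    (ht : 1 ≤ t) (huN : u ∈ NB (θ t)) (hus : u ∈ s) :
    M (t - 1) (s \ {u}) + 1 ≤ M t s :=
  (hM t s).2 (add_one_mem_matchingSizes ht huN hus (hM _ _).1)

lemma IsMatchingNumber.bellman_gap (hM : IsMatchingNumber NB θ M) {o : Option U} {s' : Finset U}
    (ht : 1 ≤ t) (hsome : ∀ u, o = some u → u ∈ NB (θ t) ∧ u ∈ s ∧ s' = s \ {u})
    (hnone : o = none → s' = s) :
    (if o ≠ none then 1 else 0) + M (t - 1) s' ≤ M t s ∧
      M t s ≤ (if o ≠ none then 1 else 0) + M (t - 1) s' + 1 := by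
  cases o with
  | none =>
    have := hM.apply_pred_le (t := t) (s := s)
    have := hM.apply_le_pred_add_one (t := t) (s := s)
    simp only [hnone rfl, ne_eq, not_true_eq_false, if_false]
    omega
  | some u =>
    obtain ⟨huN, hus, rfl⟩ := hsome u rfl
    have := hM.apply_le_sdiff_add_one (t := t - 1) (s := s) u
    have := hM.apply_le_pred_add_one (t := t) (s := s)
    have := hM.apply_sdiff_pred_add_one_le ht huN hus
    simp only [ne_eq, reduceCtorEq, not_false_eq_true, if_true]
    omega

lemma ite_ne_eq_sub {a b : ℕ} (h₁ : b ≤ a) (h₂ : a ≤ b + 1) :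
    (if a ≠ b then (1 : ℤ) else 0) = a - b := by
  split_ifs <;> omega

lemma sum_Icc_one_sub_pred (g : ℕ → ℤ) : ∀ T : ℕ,
    ∑ t ∈ Icc 1 T, (g t - g (t - 1)) = g T - g 0
  | 0 => by simp
  | T + 1 => by
    rw [sum_Icc_succ_top (by omega), sum_Icc_one_sub_pred g T, Nat.add_sub_cancel]
    ring

end OnlineMatching

open OnlineMatching in
/-- **Exact compensated-coupling identity for online stochastic bipartite matching**:
for any online matching policy (matching each arrival `θ^t` to an available neighbor
`Ut t = some u` or discarding it, `Ut t = none`), on every sample path,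
`v_off − v_on = Σ_{t=1}^T 1{ M(G_t(S^t)) ≠ 1{U^t ≠ ∅} + M(G_{t−1}(S^{t−1})) }`,
where `M t s` is the maximum size of a matching between the available nodes `s` and the
future arrivals `θ^t, …, θ^1`. -/
theorem online_bipartite_matching_compensated_coupling
    {U V : Type*} [Fintype U] [DecidableEq U]
    (T : ℕ) (NB : V → Finset U)              -- neighborhoods N(v) ⊆ U
    (θ : ℕ → V)                              -- the sample path of arrivals, θ t = θ^t
    -- maximum-matching size between available nodes s and the last t arrivals:
    (M : ℕ → Finset U → ℕ)
    (hM : ∀ (t : ℕ) (s : Finset U),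
      IsGreatest {k : ℕ | ∃ D : Finset ℕ, D ⊆ Finset.Icc 1 t ∧ D.card = k ∧
        ∃ f : ℕ → U, Set.InjOn f ↑D ∧ ∀ τ ∈ D, f τ ∈ NB (θ τ) ∧ f τ ∈ s} (M t s))
    -- the online policy: matched node Ut t (none = discard) and available sets St
    (Ut : ℕ → Option U) (St : ℕ → Finset U)
    (hST : St T = Finset.univ)
    (hpol : ∀ t, 1 ≤ t → t ≤ T →
      (∀ u, Ut t = some u → u ∈ NB (θ t) ∧ u ∈ St t ∧ St (t - 1) = St t \ {u}) ∧
      (Ut t = none → St (t - 1) = St t)) :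
    (M T Finset.univ : ℤ) - ∑ t ∈ Finset.Icc 1 T, (if Ut t ≠ none then (1 : ℤ) else 0)
      = ∑ t ∈ Finset.Icc 1 T,
          (if M t (St t) ≠ (if Ut t ≠ none then 1 else 0) + M (t - 1) (St (t - 1))
            then (1 : ℤ) else 0) := by
  have hM : IsMatchingNumber NB θ M := hM
  have hgap : ∀ t ∈ Icc 1 T,
      (if M t (St t) ≠ (if Ut t ≠ none then 1 else 0) + M (t - 1) (St (t - 1))
        then (1 : ℤ) else 0)
        = (M t (St t) - M (t - 1) (St (t - 1)) : ℤ) - (if Ut t ≠ none then 1 else 0) := by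
    intro t ht
    obtain ⟨h₁, h₂⟩ := mem_Icc.1 ht
    obtain ⟨hlo, hhi⟩ := hM.bellman_gap h₁ (hpol t h₁ h₂).1 (hpol t h₁ h₂).2
    rw [ite_ne_eq_sub hlo hhi]
    split_ifs <;> push_cast <;> ring
  rw [sum_congr rfl hgap, sum_sub_distrib, sum_Icc_one_sub_pred (fun t => (M t (St t) : ℤ)),
    hST, hM.apply_zero]
  push_cast
  ring
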